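/- arXiv:1704.00003 — 5 statements merged into one kernel-verified Lean document; each statement's English description precedes it below -/
import Mathlib

section
/- Let f̂₁,…,f̂_n be real-valued random variables and μ₁,…,μ_n real numbers such that for each i, |μ_i| ≤ R_i, |f̂_i| ≤ R_i almost surely (with R_i > 0), and P(|μ_i − f̂_i| > ε_i) ≤ δ_i. Then P( |∏_{i=1}^n μ_i − ∏_{i=1}^n f̂_i| > ε ) ≤ Σ_{i=1}^n δ_i, where ε = (∏_{i=1}^n R_i)·(Σ_{i=1}^n ε_i/R_i). -/
open MeasureTheory ProbabilityTheory

theorem Finset.abs_prod_sub_prod_le {ι : Type*} (s : Finset ι) {x y R ε : ι → ℝ}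
    (hR : ∀ i ∈ s, 0 < R i) (hx : ∀ i ∈ s, |x i| ≤ R i) (hy : ∀ i ∈ s, |y i| ≤ R i)
    (hε : ∀ i ∈ s, |x i - y i| ≤ ε i) :
    |∏ i ∈ s, x i - ∏ i ∈ s, y i| ≤ (∏ i ∈ s, R i) * ∑ i ∈ s, ε i / R i := by
  classical
  induction s using Finset.induction_on with
  | empty => simp
  | insert a s ha ih =>
    simp only [Finset.forall_mem_insert] at hR hx hy hε
    have hYR : |∏ i ∈ s, y i| ≤ ∏ i ∈ s, R i := by
      rw [Finset.abs_prod]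
      exact Finset.prod_le_prod (fun i _ => abs_nonneg _) hy.2
    have hXY := ih hR.2 hx.2 hy.2 hε.2
    rw [Finset.prod_insert ha, Finset.prod_insert ha, Finset.prod_insert ha,
      Finset.sum_insert ha]
    calc |x a * ∏ i ∈ s, x i - y a * ∏ i ∈ s, y i|
        = |x a * (∏ i ∈ s, x i - ∏ i ∈ s, y i) + (x a - y a) * ∏ i ∈ s, y i| := by ring_nf
      _ ≤ |x a| * |∏ i ∈ s, x i - ∏ i ∈ s, y i| + |x a - y a| * |∏ i ∈ s, y i| := by
        rw [← abs_mul, ← abs_mul]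
        exact abs_add_le _ _
      _ ≤ R a * ((∏ i ∈ s, R i) * ∑ i ∈ s, ε i / R i) + ε a * ∏ i ∈ s, R i := by
        gcongr
        · exact hR.1.le
        · exact hx.1
        · exact (abs_nonneg _).trans hε.1
        · exact hε.1
      _ = R a * (∏ i ∈ s, R i) * (ε a / R a + ∑ i ∈ s, ε i / R i) := by
        field_simp [hR.1.ne']
        ring

theorem stmt_1_general
    {Ω : Type*} [MeasurableSpace Ω] (P : Measure Ω) [IsProbabilityMeasure P]
    (n : ℕ) (f : Fin n → Ω → ℝ)
    (μs : Fin n → ℝ) (R : Fin n → ℝ) (hR : ∀ i, 0 < R i)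
    (hμbd : ∀ i, |μs i| ≤ R i)
    (hfbd : ∀ i, ∀ᵐ ω ∂P, |f i ω| ≤ R i)
    (ε : Fin n → ℝ) (δ : Fin n → ℝ)
    (hdev : ∀ i, (P {ω | ε i < |μs i - f i ω|}).toReal ≤ δ i) :
    (P {ω | (∏ i, R i) * (∑ i, ε i / R i) <
        |(∏ i, μs i) - ∏ i, f i ω|}).toReal ≤ ∑ i, δ i := by
  have hbad_sub : {ω | (∏ i, R i) * (∑ i, ε i / R i) < |(∏ i, μs i) - ∏ i, f i ω|}
      ≤ᵐ[P] ⋃ i, {ω | ε i < |μs i - f i ω|} := by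
    filter_upwards [ae_all_iff.2 hfbd] with ω hfω hbad
    change ω ∈ ⋃ i, _
    by_contra! hgood
    rw [Set.mem_iUnion, not_exists] at hgood
    exact (not_lt.2 <| Finset.univ.abs_prod_sub_prod_le (fun i _ => hR i)
      (fun i _ => hμbd i) (fun i _ => hfω i) (fun i _ => not_lt.1 (hgood i))) hbad
  calc (P _).toReal ≤ P.real (⋃ i, {ω | ε i < |μs i - f i ω|}) :=
        ENNReal.toReal_mono (measure_ne_top P _) (measure_mono_ae hbad_sub)
    _ ≤ ∑ i, P.real {ω | ε i < |μs i - f i ω|} := measureReal_iUnion_fintype_le _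
    _ ≤ ∑ i, δ i := Finset.sum_le_sum fun i _ => hdev i

/-- Chaining lemma for products of bounded estimators: if each `f̂ᵢ` is bounded by `Rᵢ`,
`|μᵢ| ≤ Rᵢ`, and `P(|μᵢ - f̂ᵢ| > εᵢ) ≤ δᵢ`, then the product deviates by more than
`(∏ Rᵢ)(∑ εᵢ/Rᵢ)` with probability at most `∑ δᵢ`. -/
theorem stmt_1
    {Ω : Type*} [MeasurableSpace Ω] (P : Measure Ω) [IsProbabilityMeasure P]
    (n : ℕ) (f : Fin n → Ω → ℝ) (hfmeas : ∀ i, Measurable (f i))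
    (μs : Fin n → ℝ) (R : Fin n → ℝ) (hR : ∀ i, 0 < R i)
    (hμbd : ∀ i, |μs i| ≤ R i)
    (hfbd : ∀ i, ∀ᵐ ω ∂P, |f i ω| ≤ R i)
    (ε : Fin n → ℝ) (δ : Fin n → ℝ)
    (hdev : ∀ i, (P {ω | ε i < |μs i - f i ω|}).toReal ≤ δ i) :
    (P {ω | (∏ i, R i) * (∑ i, ε i / R i) <
        |(∏ i, μs i) - ∏ i, f i ω|}).toReal ≤ ∑ i, δ i :=
  stmt_1_general P n f μs R hR hμbd hfbd ε δ hdev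
end

section
/- Let z ∈ {0,1}^K be a random vector whose coordinates are independent with z_i ∼ Bernoulli(π_i), where π ∈ (0,1)^K. Then E[z ⊗ z ⊗ z] = π ⊗ π ⊗ π + Sym₃[π ⊗ diag(π − π²)] + diag₃(π − 3π² + 2π³), where Sym₃[π ⊗ D]_{ijk} := π_i D_{jk} + π_j D_{ik} + π_k D_{ij} for a symmetric matrix D. -/
/-!
Since each `zᵢ` takes values in `{0, 1}`, it is idempotent, so `zᵢ zⱼ zₖ` is the product of
`zₗ` over the *set* `{i, j, k}`. Independence turns the expectation of that product into
`∏ₗ πₗ` over the same set, and the right-hand side of the moment formula is this product in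
each of the five coincidence patterns of `i, j, k`.
-/

open MeasureTheory ProbabilityTheory Finset

theorem Finset.mul_prod_eq_prod_insert_of_isIdempotentElem {ι M : Type*} [CommMonoid M]
    [DecidableEq ι] (s : Finset ι) (f : ι → M) {a : ι} (ha : IsIdempotentElem (f a)) :
    f a * ∏ x ∈ s, f x = ∏ x ∈ insert a s, f x := by
  by_cases has : a ∈ s
  · rw [insert_eq_of_mem has, ← mul_prod_erase s f has, ← mul_assoc, ha.eq]
  · rw [prod_insert has]

theorem mul_mul_eq_prod_triple {ι M : Type*} [CommMonoid M] [DecidableEq ι] (f : ι → M)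
    (hf : ∀ l, IsIdempotentElem (f l)) (i j k : ι) :
    f i * f j * f k = ∏ l ∈ {i, j, k}, f l := by
  rw [← mul_prod_eq_prod_insert_of_isIdempotentElem _ _ (hf i),
    ← mul_prod_eq_prod_insert_of_isIdempotentElem _ _ (hf j), prod_singleton, mul_assoc]

theorem ProbabilityTheory.iIndepFun.integral_finset_prod_eq_prod_integral
    {Ω ι : Type*} [MeasurableSpace Ω] {μ : Measure Ω} {X : ι → Ω → ℝ} (hX : iIndepFun X μ)
    (mX : ∀ i, AEStronglyMeasurable (X i) μ) (s : Finset ι) :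
    ∫ ω, ∏ i ∈ s, X i ω ∂μ = ∏ i ∈ s, ∫ ω, X i ω ∂μ := by
  have hXs : iIndepFun (fun i : s => X i) μ := hX.precomp Subtype.val_injective
  have hprod : ∀ ω, ∏ i : s, X i ω = ∏ i ∈ s, X i ω := fun ω => prod_coe_sort s (X · ω)
  simpa only [hprod, prod_coe_sort s (fun i => ∫ ω, X i ω ∂μ)] using
    hXs.integral_fun_prod_eq_prod_integral (fun i => mX i)

theorem integral_eq_of_forall_eq_zero_or_eq_one {Ω : Type*} [MeasurableSpace Ω]
    {μ : Measure Ω} {X : Ω → ℝ} (hX : Measurable X)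
    (h01 : ∀ ω, X ω = 0 ∨ X ω = 1) {p : ℝ} (hp : 0 ≤ p)
    (hμ : μ {ω | X ω = 1} = ENNReal.ofReal p) :
    ∫ ω, X ω ∂μ = p := by
  have hX_eq : X = Set.indicator {ω | X ω = 1} (fun _ => 1) := by
    funext ω
    rcases h01 ω with h | h <;> simp [h]
  have hmeas : MeasurableSet {ω | X ω = 1} := hX (measurableSet_singleton 1)
  rw [hX_eq, integral_indicator_const _ hmeas, measureReal_def, hμ, ENNReal.toReal_ofReal hp, smul_eq_mul, mul_one]

theorem third_moment_formula_eq_prod {ι R : Type*} [CommRing R] [DecidableEq ι] (π : ι → R)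
    (i j k : ι) :
    π i * π j * π k
        + (π i * (if j = k then π j - (π j) ^ 2 else 0)
           + π j * (if i = k then π i - (π i) ^ 2 else 0)
           + π k * (if i = j then π i - (π i) ^ 2 else 0))
        + (if i = j ∧ j = k then π i - 3 * (π i) ^ 2 + 2 * (π i) ^ 3 else 0)
      = ∏ l ∈ {i, j, k}, π l := by
  by_cases hij : i = j <;> by_cases hjk : j = k <;> by_cases hik : i = k <;>
    simp_all <;> ring

/-- Third-order moment of the IBP latent binary vector: if the coordinates of
`z ∈ {0,1}^K` are independent Bernoulli(πᵢ) variables, then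
`E[z ⊗ z ⊗ z] = π⊗π⊗π + Sym₃[π ⊗ diag(π - π²)] + diag₃(π - 3π² + 2π³)`. -/
theorem stmt_3
    {Ω : Type*} [MeasurableSpace Ω] (P : Measure Ω) [IsProbabilityMeasure P]
    (K : ℕ) (π : Fin K → ℝ) (hπ : ∀ i, π i ∈ Set.Ioo (0 : ℝ) 1)
    (z : Ω → Fin K → ℝ)
    (hzmeas : ∀ i, Measurable (fun ω => z ω i))
    (hz01 : ∀ ω i, z ω i = 0 ∨ z ω i = 1)
    (hindep : iIndepFun (fun i ω => z ω i) P)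
    (hBer : ∀ i, P {ω | z ω i = 1} = ENNReal.ofReal (π i)) :
    ∀ i j k : Fin K,
      ∫ ω, z ω i * z ω j * z ω k ∂P
        = π i * π j * π k
          + (π i * (if j = k then π j - (π j) ^ 2 else 0)
             + π j * (if i = k then π i - (π i) ^ 2 else 0)
             + π k * (if i = j then π i - (π i) ^ 2 else 0))
          + (if i = j ∧ j = k then π i - 3 * (π i) ^ 2 + 2 * (π i) ^ 3 else 0) := by
  intro i j k
  have hidem : ∀ ω l, IsIdempotentElem (z ω l) := fun ω l => by
    rcases hz01 ω l with h | h <;> simp [h, IsIdempotentElem]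
  have hmean : ∀ l, ∫ ω, z ω l ∂P = π l := fun l =>
    integral_eq_of_forall_eq_zero_or_eq_one (hzmeas l) (hz01 · l) (hπ l).1.le (hBer l)
  simp_rw [mul_mul_eq_prod_triple (z _) (hidem _),
    hindep.integral_finset_prod_eq_prod_integral (fun l => (hzmeas l).aestronglyMeasurable),
    hmean, third_moment_formula_eq_prod]
end

section
/- Let z ∈ {0,1}^K be a random vector whose coordinates are independent with z_i ∼ Bernoulli(π_i), where π ∈ (0,1)^K. Set S₁ := π, S₂ := diag(π − π²), S₃ := diag₃(π − 3π² + 2π³). Then E[z ⊗ z ⊗ z ⊗ z] = S₁⊗S₁⊗S₁⊗S₁ + Sym₆[S₂ ⊗ S₁ ⊗ S₁] + Sym₃[S₂ ⊗ S₂] + Sym₄[S₃ ⊗ S₁] + diag₄(π − 7π² + 12π³ − 6π⁴), where Sym₆[S₂⊗S₁⊗S₁]_{ijkl} := Σ over the 6 unordered pairs {a,b} ⊂ {i,j,k,l} of [S₂]_{ab}·[S₁]_c·[S₁]_d (with {c,d} the complementary indices), Sym₃[S₂⊗S₂]_{ijkl} := [S₂]_{ij}[S₂]_{kl} + [S₂]_{ik}[S₂]_{jl}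 + [S₂]_{il}[S₂]_{jk}, and Sym₄[S₃⊗S₁]_{ijkl} := Σ over the 4 choices of one index receiving S₁ of [S₃]_{abc}[S₁]_d. -/
open MeasureTheory ProbabilityTheory

/-- Order-2 diagonal tensor `diag(v)` with entries `vₐ` at `(a,a)` and `0` elsewhere. -/
def bdiag2 {K : ℕ} (v : Fin K → ℝ) (a b : Fin K) : ℝ := if a = b then v a else 0

/-- Order-3 diagonal tensor `diag₃(v)`. -/
def bdiag3 {K : ℕ} (v : Fin K → ℝ) (a b c : Fin K) : ℝ := if a = b ∧ b = c then v a else 0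

/-- Order-4 diagonal tensor `diag₄(v)`. -/
def bdiag4 {K : ℕ} (v : Fin K → ℝ) (a b c d : Fin K) : ℝ :=
  if a = b ∧ b = c ∧ c = d then v a else 0

/-!
The coefficients `p - p²`, `p - 3p² + 2p³` and `p - 7p² + 12p³ - 6p⁴` are the second, third and
fourth cumulants of a Bernoulli(`p`) variable, and the right-hand side is the moment–cumulant
formula summed over the set partitions of `{i, j, k, l}`, where independence kills every block
containing two distinct coordinates. Concretely: since `zₜ² = zₜ`, the product `zᵢzⱼzₖzₗ` is the
product of `zₜ` over the *set* `{i, j, k, l}`, whose expectation is `∏ πₜ` by independence; what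
remains is a polynomial identity, checked on each pattern of coincidences among the indices.
-/

theorem Multiset.prod_map_eq_prod_toFinset_of_isIdempotentElem {ι M : Type*} [DecidableEq ι]
    [CommMonoid M] (s : Multiset ι) {f : ι → M} (hf : ∀ i, IsIdempotentElem (f i)) :
    (s.map f).prod = ∏ i ∈ s.toFinset, f i := by
  rw [Finset.prod_multiset_map_count]
  exact Finset.prod_congr rfl fun i hi ↦
    (hf i).pow_eq (Multiset.count_ne_zero.2 (Multiset.mem_toFinset.1 hi))

theorem ProbabilityTheory.iIndepFun.integral_finset_prod {Ω ι 𝕜 : Type*} [MeasurableSpace Ω]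
    [RCLike 𝕜] {μ : Measure Ω} {X : ι → Ω → 𝕜} (hX : iIndepFun X μ)
    (mX : ∀ i, AEStronglyMeasurable (X i) μ) (s : Finset ι) :
    ∫ ω, ∏ i ∈ s, X i ω ∂μ = ∏ i ∈ s, μ[X i] := by
  simp_rw [← Finset.prod_coe_sort s]
  exact (hX.precomp Subtype.val_injective).integral_fun_prod_eq_prod_integral fun i ↦ mX i

theorem integral_eq_measureReal_of_zero_or_one {Ω : Type*} [MeasurableSpace Ω] {μ : Measure Ω}
    {X : Ω → ℝ} (hX : Measurable X) (h01 : ∀ ω, X ω = 0 ∨ X ω = 1) :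
    μ[X] = μ.real {ω | X ω = 1} := by
  have hX_eq : X = {ω | X ω = 1}.indicator 1 := by
    ext ω
    rcases h01 ω with h | h <;> simp [h]
  conv_lhs => rw [hX_eq]
  exact integral_indicator_one (hX (measurableSet_singleton 1))

theorem prod_insert_four_eq_bernoulli_cumulant_expansion {K : ℕ} (p : Fin K → ℝ)
    (i j k l : Fin K) :
    ∏ t ∈ ({i, j, k, l} : Finset (Fin K)), p t
        = p i * p j * p k * p l
          + (bdiag2 (fun t => p t - (p t) ^ 2) i j * p k * p l
             + bdiag2 (fun t => p t - (p t) ^ 2) i k * p j * p l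
             + bdiag2 (fun t => p t - (p t) ^ 2) i l * p j * p k
             + bdiag2 (fun t => p t - (p t) ^ 2) j k * p i * p l
             + bdiag2 (fun t => p t - (p t) ^ 2) j l * p i * p k
             + bdiag2 (fun t => p t - (p t) ^ 2) k l * p i * p j)
          + (bdiag2 (fun t => p t - (p t) ^ 2) i j * bdiag2 (fun t => p t - (p t) ^ 2) k l
             + bdiag2 (fun t => p t - (p t) ^ 2) i k * bdiag2 (fun t => p t - (p t) ^ 2) j l
             + bdiag2 (fun t => p t - (p t) ^ 2) i l * bdiag2 (fun t => p t - (p t) ^ 2) j k)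
          + (bdiag3 (fun t => p t - 3 * (p t) ^ 2 + 2 * (p t) ^ 3) j k l * p i
             + bdiag3 (fun t => p t - 3 * (p t) ^ 2 + 2 * (p t) ^ 3) i k l * p j
             + bdiag3 (fun t => p t - 3 * (p t) ^ 2 + 2 * (p t) ^ 3) i j l * p k
             + bdiag3 (fun t => p t - 3 * (p t) ^ 2 + 2 * (p t) ^ 3) i j k * p l)
          + bdiag4 (fun t => p t - 7 * (p t) ^ 2 + 12 * (p t) ^ 3 - 6 * (p t) ^ 4) i j k l := by
  simp only [bdiag2, bdiag3, bdiag4]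
  by_cases hij : i = j <;> by_cases hik : i = k <;> by_cases hil : i = l <;>
    by_cases hjk : j = k <;> by_cases hjl : j = l <;> by_cases hkl : k = l <;>
    subst_vars <;> simp_all <;> ring

theorem stmt_4_general
    {Ω : Type*} [MeasurableSpace Ω] (P : Measure Ω)
    (K : ℕ) (π : Fin K → ℝ) (hπ : ∀ i, π i ∈ Set.Ioo (0 : ℝ) 1)
    (z : Ω → Fin K → ℝ)
    (hzmeas : ∀ i, Measurable (fun ω => z ω i))
    (hz01 : ∀ ω i, z ω i = 0 ∨ z ω i = 1)
    (hindep : iIndepFun (fun i ω => z ω i) P)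
    (hBer : ∀ i, P {ω | z ω i = 1} = ENNReal.ofReal (π i)) :
    ∀ i j k l : Fin K,
      ∫ ω, z ω i * z ω j * z ω k * z ω l ∂P
        = π i * π j * π k * π l
          + (bdiag2 (fun t => π t - (π t) ^ 2) i j * π k * π l
             + bdiag2 (fun t => π t - (π t) ^ 2) i k * π j * π l
             + bdiag2 (fun t => π t - (π t) ^ 2) i l * π j * π k
             + bdiag2 (fun t => π t - (π t) ^ 2) j k * π i * π l
             + bdiag2 (fun t => π t - (π t) ^ 2) j l * π i * π k
             + bdiag2 (fun t => π t - (π t) ^ 2) k l * π i * π j)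
          + (bdiag2 (fun t => π t - (π t) ^ 2) i j * bdiag2 (fun t => π t - (π t) ^ 2) k l
             + bdiag2 (fun t => π t - (π t) ^ 2) i k * bdiag2 (fun t => π t - (π t) ^ 2) j l
             + bdiag2 (fun t => π t - (π t) ^ 2) i l * bdiag2 (fun t => π t - (π t) ^ 2) j k)
          + (bdiag3 (fun t => π t - 3 * (π t) ^ 2 + 2 * (π t) ^ 3) j k l * π i
             + bdiag3 (fun t => π t - 3 * (π t) ^ 2 + 2 * (π t) ^ 3) i k l * π j
             + bdiag3 (fun t => π t - 3 * (π t) ^ 2 + 2 * (π t) ^ 3) i j l * π k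
             + bdiag3 (fun t => π t - 3 * (π t) ^ 2 + 2 * (π t) ^ 3) i j k * π l)
          + bdiag4 (fun t => π t - 7 * (π t) ^ 2 + 12 * (π t) ^ 3 - 6 * (π t) ^ 4) i j k l := by
  intro i j k l
  have hmean (t : Fin K) : ∫ ω, z ω t ∂P = π t := by
    rw [integral_eq_measureReal_of_zero_or_one (hzmeas t) (hz01 · t), measureReal_def, hBer t,
      ENNReal.toReal_ofReal (hπ t).1.le]
  have hcollapse (ω : Ω) :
      z ω i * z ω j * z ω k * z ω l = ∏ t ∈ ({i, j, k, l} : Finset (Fin K)), z ω t := by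
    have hidem (t : Fin K) : IsIdempotentElem (z ω t) := by
      rcases hz01 ω t with h | h <;> simp [IsIdempotentElem, h]
    simpa [mul_assoc] using
      Multiset.prod_map_eq_prod_toFinset_of_isIdempotentElem {i, j, k, l} hidem
  simp_rw [hcollapse]
  rw [hindep.integral_finset_prod (fun t ↦ (hzmeas t).aestronglyMeasurable)]
  simp_rw [hmean]
  exact prod_insert_four_eq_bernoulli_cumulant_expansion π i j k l

/-- Fourth-order moment of the IBP latent binary vector: with `S₁ = π`,
`S₂ = diag(π - π²)`, `S₃ = diag₃(π - 3π² + 2π³)`,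
`E[z⊗z⊗z⊗z] = S₁⊗S₁⊗S₁⊗S₁ + Sym₆[S₂⊗S₁⊗S₁] + Sym₃[S₂⊗S₂] + Sym₄[S₃⊗S₁]
              + diag₄(π - 7π² + 12π³ - 6π⁴)`. -/
theorem stmt_4
    {Ω : Type*} [MeasurableSpace Ω] (P : Measure Ω) [IsProbabilityMeasure P]
    (K : ℕ) (π : Fin K → ℝ) (hπ : ∀ i, π i ∈ Set.Ioo (0 : ℝ) 1)
    (z : Ω → Fin K → ℝ)
    (hzmeas : ∀ i, Measurable (fun ω => z ω i))
    (hz01 : ∀ ω i, z ω i = 0 ∨ z ω i = 1)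
    (hindep : iIndepFun (fun i ω => z ω i) P)
    (hBer : ∀ i, P {ω | z ω i = 1} = ENNReal.ofReal (π i)) :
    ∀ i j k l : Fin K,
      ∫ ω, z ω i * z ω j * z ω k * z ω l ∂P
        = π i * π j * π k * π l
          + (bdiag2 (fun t => π t - (π t) ^ 2) i j * π k * π l
             + bdiag2 (fun t => π t - (π t) ^ 2) i k * π j * π l
             + bdiag2 (fun t => π t - (π t) ^ 2) i l * π j * π k
             + bdiag2 (fun t => π t - (π t) ^ 2) j k * π i * π l
             + bdiag2 (fun t => π t - (π t) ^ 2) j l * π i * π k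
             + bdiag2 (fun t => π t - (π t) ^ 2) k l * π i * π j)
          + (bdiag2 (fun t => π t - (π t) ^ 2) i j * bdiag2 (fun t => π t - (π t) ^ 2) k l
             + bdiag2 (fun t => π t - (π t) ^ 2) i k * bdiag2 (fun t => π t - (π t) ^ 2) j l
             + bdiag2 (fun t => π t - (π t) ^ 2) i l * bdiag2 (fun t => π t - (π t) ^ 2) j k)
          + (bdiag3 (fun t => π t - 3 * (π t) ^ 2 + 2 * (π t) ^ 3) j k l * π i
             + bdiag3 (fun t => π t - 3 * (π t) ^ 2 + 2 * (π t) ^ 3) i k l * π j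
             + bdiag3 (fun t => π t - 3 * (π t) ^ 2 + 2 * (π t) ^ 3) i j l * π k
             + bdiag3 (fun t => π t - 3 * (π t) ^ 2 + 2 * (π t) ^ 3) i j k * π l)
          + bdiag4 (fun t => π t - 7 * (π t) ^ 2 + 12 * (π t) ^ 3 - 6 * (π t) ^ 4) i j k l :=
  stmt_4_general P K π hπ z hzmeas hz01 hindep hBer
end

section
/- In the linear-Gaussian latent feature model x = Φz + ε, with S₁ := E[x] = Φπ and M₂ := E[x ⊗ x], one has M₂ − S₁ ⊗ S₁ − σ²·I_d = Φ·diag(π − π²)·Φᵀ = Σ_{i=1}^K (π_i − π_i²)·φ_i ⊗ φ_i. -/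
open MeasureTheory ProbabilityTheory Matrix

/-!
Write `x = [Φ | I] (z, ε)` as a fixed linear image of the random vector `(z, ε)`, whose
coordinates are independent. For pairwise independent square-integrable coordinates `Y`,
`cov[(A Y)_a, (A Y)_b] = (A diag(Var Y) Aᵀ)_{ab}`, and `M₂ - S₁ ⊗ S₁` is exactly this
covariance. Here `Var zᵢ = πᵢ - πᵢ²` because `zᵢ² = zᵢ`, and `Var ε_a = σ²`, so the identity
block of `[Φ | I]` contributes exactly `σ² I`.
-/

lemma Matrix.fromCols_mul_diagonal_sumElim_mul_transpose {m n₁ n₂ R : Type*}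
    [Fintype n₁] [Fintype n₂] [DecidableEq n₁] [DecidableEq n₂] [CommSemiring R]
    (A₁ : Matrix m n₁ R) (A₂ : Matrix m n₂ R) (v₁ : n₁ → R) (v₂ : n₂ → R) :
    fromCols A₁ A₂ * diagonal (Sum.elim v₁ v₂) * (fromCols A₁ A₂)ᵀ
      = A₁ * diagonal v₁ * A₁ᵀ + A₂ * diagonal v₂ * A₂ᵀ := by
  rw [← fromBlocks_diagonal, fromCols_mul_fromBlocks, transpose_fromCols, fromCols_mul_fromRows]
  simp

lemma Matrix.mul_diagonal_mul_transpose_apply {m n R : Type*} [Fintype n] [DecidableEq n]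
    [CommSemiring R] (A : Matrix m n R) (v : n → R) (a b : m) :
    (A * diagonal v * Aᵀ) a b = ∑ i, v i * A a i * A b i := by
  rw [mul_apply]
  simp only [mul_diagonal, transpose_apply]
  exact Finset.sum_congr rfl fun i _ => by ring

section LinearImage

variable {Ω ι κ : Type*} [MeasurableSpace Ω] {μ : Measure Ω} [Fintype ι] {Y : ι → Ω → ℝ}

lemma integral_mulVec_apply (hY : ∀ i, Integrable (Y i) μ) (A : Matrix κ ι ℝ)
    (a : κ) :
    ∫ ω, (A *ᵥ fun i => Y i ω) a ∂μ = (A *ᵥ fun i => μ[Y i]) a := by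
  simp only [mulVec, dotProduct]
  rw [integral_finsetSum _ fun i _ => (hY i).const_mul _]
  simp only [integral_const_mul]

lemma memLp_mulVec_apply {p : ENNReal} (hY : ∀ i, MemLp (Y i) p μ) (A : Matrix κ ι ℝ) (a : κ) :
    MemLp (fun ω => (A *ᵥ fun i => Y i ω) a) p μ :=
  memLp_finsetSum _ fun i _ => (hY i).const_mul _

lemma covariance_mulVec_apply [IsFiniteMeasure μ] [DecidableEq ι]
    (hY : ∀ i, MemLp (Y i) 2 μ) (hind : Pairwise fun i j => IndepFun (Y i) (Y j) μ)
    (A : Matrix κ ι ℝ) (a b : κ) :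
    cov[fun ω => (A *ᵥ fun i => Y i ω) a, fun ω => (A *ᵥ fun i => Y i ω) b; μ]
      = (A * diagonal (fun i => Var[Y i; μ]) * Aᵀ) a b := by
  simp only [mulVec, dotProduct]
  rw [covariance_fun_sum_fun_sum (fun i => (hY i).const_mul _) (fun j => (hY j).const_mul _),
    mul_diagonal_mul_transpose_apply]
  refine Finset.sum_congr rfl fun i _ => ?_
  rw [Finset.sum_eq_single i]
  · rw [covariance_const_mul_left, covariance_const_mul_right,
      covariance_self (hY i).aemeasurable]
    ring
  · intro j _ hji
    rw [covariance_const_mul_left, covariance_const_mul_right,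
      (hind hji.symm).covariance_eq_zero (hY i) (hY j), mul_zero, mul_zero]
  · simp

lemma integral_mul_sub_integral_mul_integral_mulVec_apply [IsProbabilityMeasure μ]
    [DecidableEq ι] (hY : ∀ i, MemLp (Y i) 2 μ) (hind : Pairwise fun i j => IndepFun (Y i) (Y j) μ)
    (A : Matrix κ ι ℝ) (a b : κ) :
    ∫ ω, (A *ᵥ fun i => Y i ω) a * (A *ᵥ fun i => Y i ω) b ∂μ
        - (∫ ω, (A *ᵥ fun i => Y i ω) a ∂μ) * (∫ ω, (A *ᵥ fun i => Y i ω) b ∂μ)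
      = (A * diagonal (fun i => Var[Y i; μ]) * Aᵀ) a b := by
  rw [← covariance_mulVec_apply hY hind,
    covariance_eq_sub (memLp_mulVec_apply hY A a) (memLp_mulVec_apply hY A b)]
  rfl

end LinearImage

section Bernoulli

variable {Ω : Type*} [MeasurableSpace Ω] {μ : Measure Ω} {Z : Ω → ℝ} {p : ℝ}

lemma memLp_of_forall_eq_zero_or_one [IsFiniteMeasure μ] (hZ : Measurable Z)
    (h01 : ∀ ω, Z ω = 0 ∨ Z ω = 1) (q : ENNReal) : MemLp Z q μ :=
  MemLp.of_bound hZ.aestronglyMeasurable 1 <| ae_of_all _ fun ω => by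
    rcases h01 ω with h | h <;> simp [h]

lemma integral_eq_of_forall_eq_zero_or_one (hZ : Measurable Z) (h01 : ∀ ω, Z ω = 0 ∨ Z ω = 1)
    (hp : 0 ≤ p) (hμ : μ {ω | Z ω = 1} = ENNReal.ofReal p) : μ[Z] = p := by
  have hZ_eq : Z = Set.indicator {ω | Z ω = 1} 1 := by
    funext ω
    rcases h01 ω with h | h <;> simp [h]
  have hset : MeasurableSet {ω | Z ω = 1} := hZ (measurableSet_singleton 1)
  conv_lhs => rw [hZ_eq]
  rw [integral_indicator_one hset, measureReal_def, hμ, ENNReal.toReal_ofReal hp]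

lemma variance_eq_of_forall_eq_zero_or_one [IsProbabilityMeasure μ] (hZ : Measurable Z)
    (h01 : ∀ ω, Z ω = 0 ∨ Z ω = 1) (hp : 0 ≤ p) (hμ : μ {ω | Z ω = 1} = ENNReal.ofReal p) :
    Var[Z; μ] = p - p ^ 2 := by
  have hZ_sq : Z ^ 2 = Z := by
    funext ω
    rcases h01 ω with h | h <;> simp [h]
  rw [variance_eq_sub (memLp_of_forall_eq_zero_or_one hZ h01 2), hZ_sq,
    integral_eq_of_forall_eq_zero_or_one hZ h01 hp hμ]

end Bernoulli

lemma ProbabilityTheory.HasLaw.memLp_of_gaussianReal {Ω : Type*} [MeasurableSpace Ω]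
    {P : Measure Ω} {X : Ω → ℝ} {m : ℝ} {v : NNReal} (hX : HasLaw X (gaussianReal m v) P)
    {p : ENNReal} (hp : p ≠ ⊤) : MemLp X p P := by
  have h := memLp_id_gaussianReal' (μ := m) (v := v) p hp
  rw [← hX.map_eq] at h
  exact (memLp_map_measure_iff aestronglyMeasurable_id hX.aemeasurable).mp h

/-- Second-order tensor for the linear-Gaussian latent feature model `x = Φz + ε`:
with `S₁ := E[x] = Φπ` and `M₂ := E[x ⊗ x]`,
`M₂ - S₁ ⊗ S₁ - σ²I = Φ diag(π - π²) Φᵀ = ∑ᵢ (πᵢ - πᵢ²) φᵢ ⊗ φᵢ`. -/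
theorem stmt_6
    {Ω : Type*} [MeasurableSpace Ω] (P : Measure Ω) [IsProbabilityMeasure P]
    (d K : ℕ) (Φ : Matrix (Fin d) (Fin K) ℝ)
    (π : Fin K → ℝ) (hπ : ∀ i, π i ∈ Set.Ioo (0 : ℝ) 1)
    (σ2 : NNReal)
    (z : Ω → Fin K → ℝ) (ε : Ω → Fin d → ℝ)
    (hzmeas : ∀ i, Measurable (fun ω => z ω i))
    (hεmeas : ∀ a, Measurable (fun ω => ε ω a))
    (hz01 : ∀ ω i, z ω i = 0 ∨ z ω i = 1)
    (hindep : iIndepFun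
      (Sum.elim (fun i ω => z ω i) (fun a ω => ε ω a) : Fin K ⊕ Fin d → Ω → ℝ) P)
    (hBer : ∀ i, P {ω | z ω i = 1} = ENNReal.ofReal (π i))
    (hGauss : ∀ a, Measure.map (fun ω => ε ω a) P = gaussianReal 0 σ2)
    (x : Ω → Fin d → ℝ)
    (hx : ∀ ω a, x ω a = (∑ i, Φ a i * z ω i) + ε ω a) :
    (∀ a, ∫ ω, x ω a ∂P = ∑ i, Φ a i * π i)
    ∧
    ((Matrix.of fun a b =>
        (∫ ω, x ω a * x ω b ∂P)
          - (∫ ω, x ω a ∂P) * (∫ ω, x ω b ∂P)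
          - (if a = b then (σ2 : ℝ) else 0))
      = Φ * Matrix.diagonal (fun i => π i - (π i) ^ 2) * Φᵀ)
    ∧
    (Φ * Matrix.diagonal (fun i => π i - (π i) ^ 2) * Φᵀ
      = Matrix.of fun a b => ∑ i, (π i - (π i) ^ 2) * Φ a i * Φ b i) := by
  set Y : Fin K ⊕ Fin d → Ω → ℝ := Sum.elim (fun i ω => z ω i) (fun a ω => ε ω a)
  have hx_Y : ∀ ω, x ω = fromCols Φ 1 *ᵥ fun k => Y k ω := fun ω => by
    have hY_ω : (fun k => Y k ω) = Sum.elim (z ω) (ε ω) := by ext (i | a) <;> rfl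
    ext a
    rw [hY_ω, fromCols_mulVec_sumElim, one_mulVec, Pi.add_apply, hx]
    rfl
  have hε_law : ∀ a, HasLaw (fun ω => ε ω a) (gaussianReal 0 σ2) P :=
    fun a => ⟨(hεmeas a).aemeasurable, hGauss a⟩
  have hY_memLp : ∀ k, MemLp (Y k) 2 P := by
    rintro (i | a)
    · exact memLp_of_forall_eq_zero_or_one (hzmeas i) (fun ω => hz01 ω i) 2
    · exact (hε_law a).memLp_of_gaussianReal ENNReal.ofNat_ne_top
  have hY_mean : (fun k => P[Y k]) = Sum.elim π 0 := by
    ext (i | a)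
    · exact integral_eq_of_forall_eq_zero_or_one (hzmeas i) (fun ω => hz01 ω i) (hπ i).1.le
        (hBer i)
    · exact (hε_law a).integral_eq.trans integral_id_gaussianReal
  have hY_var :
      (fun k => Var[Y k; P]) = Sum.elim (fun i => π i - π i ^ 2) (fun _ => (σ2 : ℝ)) := by
    ext (i | a)
    · exact variance_eq_of_forall_eq_zero_or_one (hzmeas i) (fun ω => hz01 ω i) (hπ i).1.le
        (hBer i)
    · exact (hε_law a).variance_eq.trans variance_id_gaussianReal
  have hind : Pairwise fun k l => IndepFun (Y k) (Y l) P := fun k l hkl => hindep.indepFun hkl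
  simp only [hx_Y]
  refine ⟨fun a => ?_, ?_, ?_⟩
  · rw [integral_mulVec_apply (fun k => (hY_memLp k).integrable one_le_two), hY_mean,
      fromCols_mulVec_sumElim]
    simp [mulVec, dotProduct]
  · ext a b
    rw [of_apply, integral_mul_sub_integral_mul_integral_mulVec_apply hY_memLp hind, hY_var,
      fromCols_mul_diagonal_sumElim_mul_transpose]
    simp [diagonal_apply]
  · ext a b
    exact mul_diagonal_mul_transpose_apply Φ _ a b
end

section
/- Let Φ ∈ ℝ^{d×K} have linearly independent columns φ₁,…,φ_K, let c₂ ∈ ℝ^K with c₂ᵢ > 0 and c₃ ∈ ℝ^K, and define S₂ := Σ_{i=1}^K c₂ᵢ·φ_i φ_iᵀ and S₃ := Σ_{i=1}^K c₃ᵢ·φ_i^{⊗3}. Let W ∈ ℝ^{d×K} satisfy WᵀS₂W = I_K and suppose the column span of W equals the column span of Φ. Define v_i := √(c₂ᵢ)·Wᵀφ_i. Then: (i) the vectors v₁,…,v_K are orthonormal in ℝ^K; (ii) the whitened tensor T(S₃, W, W, W), whose entries are Σ_{pqr} (S₃)_{pqr} W_{pa}W_{qb}W_{rc}, equals Σ_{i=1}^K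 c₃ᵢ·c₂ᵢ^{−3/2}·v_i^{⊗3}; and (iii) φ_i = c₂ᵢ^{−1/2}·(W⁺)ᵀ v_i for each i, where W⁺ := (WᵀW)^{−1}Wᵀ is the Moore–Penrose pseudoinverse of W. -/
/-!
Writing `S₂ = Φ D Φᵀ` with `D = diag c₂`, the whitening condition reads `V Vᵀ = 1` for the
square matrix `V = WᵀΦ D^{1/2}` whose columns are the `vᵢ`; hence also `Vᵀ V = 1`, which is
orthonormality. The third-order contraction against `W` factors through `WᵀΦ`, giving the
whitened tensor. Finally `WᵀS₂W = 1` makes `W` injective, so `WᵀW` is invertible, and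
`(W⁺)ᵀWᵀ = W(WᵀW)⁻¹Wᵀ` is the identity on the column span of `W`, which contains every `φᵢ`.
-/

open Matrix

/-- The whitened vector `vᵢ = √(c₂ᵢ) Wᵀφᵢ` associated to the `i`-th latent factor. -/
noncomputable def whitenedVec {d K : ℕ} (Φ W : Matrix (Fin d) (Fin K) ℝ)
    (c₂ : Fin K → ℝ) (i : Fin K) : Fin K → ℝ :=
  fun b => Real.sqrt (c₂ i) * ∑ a, W a b * Φ a i

namespace Matrix

variable {m n R : Type*} [Fintype n]

theorem of_sum_mul_mul_eq_mul_diagonal_mul_transpose [DecidableEq n] [CommSemiring R]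
    (A : Matrix m n R) (c : n → R) :
    (of fun a b => ∑ i, c i * A a i * A b i) = A * diagonal c * Aᵀ := by
  ext a b
  rw [of_apply, mul_apply]
  simp only [mul_diagonal, transpose_apply]
  exact Finset.sum_congr rfl fun i _ => by ring

variable [Fintype m]

theorem sum_sum_sum_mul_eq_sum_mul_vecMul [CommSemiring R] (t : n → R) (A : Matrix m n R)
    (u v w : m → R) :
    ∑ a, ∑ b, ∑ c, (∑ i, t i * A a i * A b i * A c i) * u a * v b * w c
      = ∑ i, t i * (u ᵥ* A) i * (v ᵥ* A) i * (w ᵥ* A) i := by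
  simp only [vecMul, dotProduct, Finset.mul_sum, Finset.sum_mul]
  simp_rw [Finset.sum_comm (γ := m) (α := n)]
  refine Fintype.sum_congr _ _ fun i => ?_
  conv_rhs => rw [Finset.sum_comm_cycle]
  refine Fintype.sum_congr _ _ fun a => ?_
  rw [Finset.sum_comm]
  exact Fintype.sum_congr _ _ fun c => Fintype.sum_congr _ _ fun b => by ring

theorem transpose_mul_self_eq_one_of_whitening [DecidableEq n] {c : n → ℝ} (hc : 0 ≤ c)
    {Φ W : Matrix m n ℝ} (hW : Wᵀ * (Φ * diagonal c * Φᵀ) * W = 1) :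
    (Wᵀ * Φ * diagonal (fun i => √(c i)))ᵀ * (Wᵀ * Φ * diagonal (fun i => √(c i))) = 1 := by
  have hsq : diagonal (fun i => √(c i)) * diagonal (fun i => √(c i)) = diagonal c := by
    rw [diagonal_mul_diagonal']
    exact congrArg diagonal (funext fun i => Real.mul_self_sqrt (hc i))
  rw [mul_eq_one_comm, ← hW]
  simp only [transpose_mul, diagonal_transpose, transpose_transpose, Matrix.mul_assoc]
  rw [← Matrix.mul_assoc (diagonal _), hsq]

theorem isUnit_transpose_mul_self_of_mul_eq_one [DecidableEq n] [Field R] [LinearOrder R]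
    [IsStrictOrderedRing R] {L : Matrix n m R} {A : Matrix m n R} (h : L * A = 1) :
    IsUnit (Aᵀ * A) := by
  rw [← mulVec_injective_iff_isUnit, ← coe_mulVecLin, ← LinearMap.ker_eq_bot,
    ker_mulVecLin_transpose_mul_self, LinearMap.ker_eq_bot, coe_mulVecLin]
  exact Function.LeftInverse.injective (g := (L *ᵥ ·)) fun x => by
    simp only [mulVec_mulVec, h, one_mulVec]

theorem transpose_pinv_mul_transpose_mul_self [DecidableEq n] [CommRing R] {A : Matrix m n R}
    (hA : IsUnit (Aᵀ * A).det) : ((Aᵀ * A)⁻¹ * Aᵀ)ᵀ * (Aᵀ * A) = A := by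
  rw [transpose_mul, transpose_transpose, transpose_nonsing_inv, transpose_mul,
    transpose_transpose, Matrix.mul_assoc, nonsing_inv_mul _ hA, Matrix.mul_one]

end Matrix

theorem Real.rpow_neg_div_two_mul_sqrt_pow {x : ℝ} (hx : 0 < x) (k : ℕ) :
    x ^ (-(k : ℝ) / 2) * √x ^ k = 1 := by
  rw [Real.sqrt_eq_rpow, ← Real.rpow_mul_natCast hx.le, ← Real.rpow_add hx]
  ring_nf
  exact Real.rpow_zero x

section Whitening

variable {d K : ℕ} (Φ W : Matrix (Fin d) (Fin K) ℝ) (c₂ : Fin K → ℝ)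

theorem of_whitenedVec :
    (of fun b i => whitenedVec Φ W c₂ i b) = Wᵀ * Φ * diagonal (fun i => √(c₂ i)) := by
  ext b i
  rw [of_apply, mul_diagonal, mul_apply, whitenedVec, mul_comm]
  simp only [transpose_apply]

theorem whitenedVec_eq_smul_mulVec (i : Fin K) :
    whitenedVec Φ W c₂ i = √(c₂ i) • (Wᵀ *ᵥ Φ.col i) := by
  ext b
  simp only [whitenedVec, Pi.smul_apply, smul_eq_mul, mulVec, dotProduct, transpose_apply,
    col_apply]

end Whitening

theorem stmt_19_general
    (d K : ℕ) (Φ : Matrix (Fin d) (Fin K) ℝ)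
    (c₂ : Fin K → ℝ) (hc₂ : ∀ i, 0 < c₂ i) (c₃ : Fin K → ℝ)
    (W : Matrix (Fin d) (Fin K) ℝ)
    (hW : Wᵀ * (Matrix.of fun a b => ∑ i, c₂ i * Φ a i * Φ b i) * W = 1)
    (hspan : Submodule.span ℝ (Set.range fun j : Fin K => fun a : Fin d => W a j)
      = Submodule.span ℝ (Set.range fun i : Fin K => fun a : Fin d => Φ a i)) :
    (∀ i j : Fin K,
      ∑ b, whitenedVec Φ W c₂ i b * whitenedVec Φ W c₂ j b
        = if i = j then 1 else 0)
    ∧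
    (∀ p q r : Fin K,
      ∑ a, ∑ b, ∑ c,
          (∑ i, c₃ i * Φ a i * Φ b i * Φ c i) * W a p * W b q * W c r
        = ∑ i, c₃ i * (c₂ i) ^ (-(3 : ℝ) / 2)
            * whitenedVec Φ W c₂ i p * whitenedVec Φ W c₂ i q
            * whitenedVec Φ W c₂ i r)
    ∧
    (∀ i : Fin K, (fun a => Φ a i)
        = fun a => (c₂ i) ^ (-(1 : ℝ) / 2)
            * ((((Wᵀ * W)⁻¹ * Wᵀ)ᵀ).mulVec (whitenedVec Φ W c₂ i)) a) := by
  rw [of_sum_mul_mul_eq_mul_diagonal_mul_transpose] at hW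
  refine ⟨fun i j => ?_, fun p q r => ?_, fun i => ?_⟩
  · have horth := congrFun₂
      (transpose_mul_self_eq_one_of_whitening (fun i => (hc₂ i).le) hW) i j
    rwa [← of_whitenedVec, mul_apply, one_apply] at horth
  · rw [sum_sum_sum_mul_eq_sum_mul_vecMul]
    refine Fintype.sum_congr _ _ fun i => ?_
    simp only [whitenedVec, vecMul, dotProduct]
    linear_combination (-(c₃ i * ∑ a, W a p * Φ a i) * (∑ a, W a q * Φ a i)
      * (∑ a, W a r * Φ a i)) * Real.rpow_neg_div_two_mul_sqrt_pow (hc₂ i) 3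
  · have hG : IsUnit (Wᵀ * W).det :=
      (isUnit_iff_isUnit_det _).mp (isUnit_transpose_mul_self_of_mul_eq_one hW)
    obtain ⟨x, hx⟩ : Φ.col i ∈ LinearMap.range W.mulVecLin := by
      rw [range_mulVecLin]
      exact hspan ▸ Submodule.subset_span ⟨i, rfl⟩
    have hsqrt : c₂ i ^ (-(1 : ℝ) / 2) * √(c₂ i) = 1 := by
      simpa using Real.rpow_neg_div_two_mul_sqrt_pow (hc₂ i) 1
    rw [whitenedVec_eq_smul_mulVec, ← hx, mulVecLin_apply, mulVec_smul, mulVec_mulVec,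
      mulVec_mulVec, Matrix.mul_assoc, transpose_pinv_mul_transpose_mul_self hG]
    funext a
    rw [Pi.smul_apply, smul_eq_mul, ← mul_assoc, hsqrt, one_mul]
    exact congrFun hx.symm a

/-- Correctness of the whitening and reconstruction step of the spectral algorithms:
if `S₂ = ∑ c₂ᵢ φᵢφᵢᵀ`, `S₃ = ∑ c₃ᵢ φᵢ^{⊗3}`, `WᵀS₂W = I` and `W` has the same column
span as `Φ`, then the `vᵢ = √(c₂ᵢ) Wᵀφᵢ` are orthonormal, the whitened tensor
`T(S₃,W,W,W)` equals `∑ c₃ᵢ c₂ᵢ^{-3/2} vᵢ^{⊗3}`, and `φᵢ = c₂ᵢ^{-1/2} (W⁺)ᵀvᵢ` with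
`W⁺ = (WᵀW)⁻¹Wᵀ`. -/
theorem stmt_19
    (d K : ℕ) (Φ : Matrix (Fin d) (Fin K) ℝ)
    (hΦ : LinearIndependent ℝ (fun i : Fin K => fun a : Fin d => Φ a i))
    (c₂ : Fin K → ℝ) (hc₂ : ∀ i, 0 < c₂ i) (c₃ : Fin K → ℝ)
    (W : Matrix (Fin d) (Fin K) ℝ)
    (hW : Wᵀ * (Matrix.of fun a b => ∑ i, c₂ i * Φ a i * Φ b i) * W = 1)
    (hspan : Submodule.span ℝ (Set.range fun j : Fin K => fun a : Fin d => W a j)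
      = Submodule.span ℝ (Set.range fun i : Fin K => fun a : Fin d => Φ a i)) :
    (∀ i j : Fin K,
      ∑ b, whitenedVec Φ W c₂ i b * whitenedVec Φ W c₂ j b
        = if i = j then 1 else 0)
    ∧
    (∀ p q r : Fin K,
      ∑ a, ∑ b, ∑ c,
          (∑ i, c₃ i * Φ a i * Φ b i * Φ c i) * W a p * W b q * W c r
        = ∑ i, c₃ i * (c₂ i) ^ (-(3 : ℝ) / 2)
            * whitenedVec Φ W c₂ i p * whitenedVec Φ W c₂ i q
            * whitenedVec Φ W c₂ i r)
    ∧
    (∀ i : Fin K, (fun a => Φ a i)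
        = fun a => (c₂ i) ^ (-(1 : ℝ) / 2)
            * ((((Wᵀ * W)⁻¹ * Wᵀ)ᵀ).mulVec (whitenedVec Φ W c₂ i)) a) :=
  stmt_19_general d K Φ c₂ hc₂ c₃ W hW hspan
end
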